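/- For every odd integer p > 1 and every real C with 1 < C < p, the number of positive integers n ≤ N that can be written as a sum of distinct elements of A_p with all summands b satisfying b₁ ≤ b < C·b₁ (where b₁ is the smallest summand), is o(N) as N → ∞. -/

import Mathlib

open Finset Filter Real Topology
open scoped Classical

/-!
Let `m = 2^a p^b` be the least summand of a short sum. Since `C < p`, for each `x` at most one `y`
gives `m ≤ 2^x p^y < C m`, and such a `y` exists only if `{(x - a) log_p 2} < log_p C`. As
`log_p 2` is irrational, the rotation by `log_p 2` enters `[log_p C, 1)` at least once in every
`q` consecutive steps, so at most a fraction `1 - 1/q` of the exponents `x ≲ log₂ N` are usable.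
Hence a short sum `n ≤ N` is one of at most `(log₂ N + 1)² · 2^((1 - 1/q) log₂ N + O(1))` subset
sums, which is `o(N)`.
-/

lemma exists_le_fract_add_mul_of_pos {ε ℓ u : ℝ} (hε : 0 < ε) (hεℓ : ε ≤ 1 - ℓ) (hu0 : 0 ≤ u)
    (hu : u < ℓ) : ∃ i : ℕ, i ≤ ⌈ε⁻¹⌉₊ ∧ ℓ ≤ Int.fract (u + i * ε) := by
  -- the first point of `u, u + ε, u + 2ε, …` above `ℓ` is still below `ℓ + ε ≤ 1`
  set i := ⌈(ℓ - u) / ε⌉₊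
  have hi_ge : (ℓ - u) / ε ≤ i := Nat.le_ceil _
  have hi_lt : (i : ℝ) < (ℓ - u) / ε + 1 := Nat.ceil_lt_add_one (by positivity)
  rw [div_le_iff₀ hε] at hi_ge
  rw [← sub_lt_iff_lt_add, lt_div_iff₀ hε] at hi_lt
  refine ⟨i, Nat.ceil_mono ?_, ?_⟩
  · rw [inv_eq_one_div]; gcongr; linarith
  · rw [Int.fract_eq_self.mpr ⟨by nlinarith, by nlinarith⟩]
    linarith

lemma exists_le_fract_add_mul_of_neg {ε ℓ u : ℝ} (hε : ε < 0) (hεℓ : -ε ≤ 1 - ℓ) (hu0 : 0 ≤ u)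
    (hu : u < ℓ) : ∃ i : ℕ, i ≤ ⌈(-ε)⁻¹⌉₊ ∧ ℓ ≤ Int.fract (u + i * ε) := by
  -- the first point of `u, u + ε, u + 2ε, …` below `0` wraps around into `[1 + ε, 1)`
  set i := ⌊u / -ε⌋₊ + 1
  have hi_gt : u / -ε < i := by simpa [i] using Nat.lt_floor_add_one (u / -ε)
  have hi_le : (i : ℝ) ≤ u / -ε + 1 := by
    simp only [i, Nat.cast_add, Nat.cast_one]
    linarith [Nat.floor_le (div_nonneg hu0 (neg_nonneg.mpr hε.le))]
  rw [div_lt_iff₀ (neg_pos.mpr hε)] at hi_gt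
  rw [← sub_le_iff_le_add, le_div_iff₀ (neg_pos.mpr hε)] at hi_le
  refine ⟨i, ?_, ?_⟩
  · have : ⌊u / -ε⌋₊ < ⌈(-ε)⁻¹⌉₊ := by
      refine Nat.cast_lt.mp ((Nat.floor_le (div_nonneg hu0 (neg_nonneg.mpr hε.le))).trans_lt ?_)
      calc u / -ε < 1 / -ε := div_lt_div_of_pos_right (by linarith) (neg_pos.mpr hε)
        _ ≤ ⌈(-ε)⁻¹⌉₊ := by rw [one_div]; exact Nat.le_ceil _
    omega
  · have : Int.fract (u + i * ε) = u + i * ε + 1 :=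
      Int.fract_eq_iff.mpr ⟨by nlinarith, by nlinarith, -1, by push_cast; ring⟩
    rw [this]
    nlinarith

lemma exists_le_fract_add_mul_of_abs_le {ε ℓ : ℝ} (hε : ε ≠ 0) (hεℓ : |ε| ≤ 1 - ℓ) (t : ℝ) :
    ∃ i : ℕ, i ≤ ⌈|ε|⁻¹⌉₊ ∧ ℓ ≤ Int.fract (t + i * ε) := by
  have hshift (i : ℕ) : Int.fract (t + i * ε) = Int.fract (Int.fract t + i * ε) := by
    nth_rw 1 [← Int.floor_add_fract t]
    rw [add_assoc, Int.fract_intCast_add]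
  simp only [hshift]
  by_cases hu : ℓ ≤ Int.fract t
  · exact ⟨0, Nat.zero_le _, by simpa using hu⟩
  rcases hε.lt_or_gt with hneg | hpos
  · rw [abs_of_neg hneg] at hεℓ ⊢
    exact exists_le_fract_add_mul_of_neg hneg hεℓ (Int.fract_nonneg t) (not_le.mp hu)
  · rw [abs_of_pos hpos] at hεℓ ⊢
    exact exists_le_fract_add_mul_of_pos hpos hεℓ (Int.fract_nonneg t) (not_le.mp hu)

lemma Irrational.exists_le_fract_add_mul {α : ℝ} (hα : Irrational α) {ℓ : ℝ} (hℓ : ℓ < 1) :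
    ∃ q : ℕ, 0 < q ∧ ∀ t : ℝ, ∃ i < q, ℓ ≤ Int.fract (t + i * α) := by
  -- Dirichlet: `k α` lies within `1 - ℓ` of an integer, and not on it, so the multiples of `k`
  -- move `Int.fract` by a small nonzero step `ε`
  obtain ⟨n, hn⟩ := exists_nat_one_div_lt (sub_pos.mpr hℓ)
  obtain ⟨k, hk0, -, hk⟩ := Real.exists_nat_abs_mul_sub_round_le α n.succ_pos
  set ε := k * α - round (k * α)
  have hε : ε ≠ 0 := sub_ne_zero.mpr ((hα.natCast_mul hk0.ne').ne_int _)
  have hεℓ : |ε| ≤ 1 - ℓ := hk.trans (le_trans (by gcongr; linarith) hn.le)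
  refine ⟨(⌈|ε|⁻¹⌉₊ + 1) * k, by positivity, fun t => ?_⟩
  obtain ⟨i, hi, hle⟩ := exists_le_fract_add_mul_of_abs_le hε hεℓ t
  refine ⟨i * k, Nat.mul_lt_mul_of_pos_right (by omega) hk0, ?_⟩
  have : t + ((i * k : ℕ) : ℝ) * α = t + i * ε + ((i * round (k * α) : ℤ) : ℝ) := by
    simp only [ε]; push_cast; ring
  rwa [this, Int.fract_add_intCast]

lemma div_le_card_filter_range {P : ℕ → Prop} [DecidablePred P] {q : ℕ}
    (hP : ∀ M, ∃ i < q, P (M + i)) (n : ℕ) : n / q ≤ #{x ∈ range n | P x} := by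
  have hblocks : ∀ d, d ≤ #{x ∈ range (d * q) | P x} := by
    intro d
    induction d with
    | zero => simp
    | succ d ih =>
      obtain ⟨i, hi, hPi⟩ := hP (d * q)
      have hssub : {x ∈ range (d * q) | P x} ⊂ {x ∈ range ((d + 1) * q) | P x} := by
        refine (ssubset_iff_of_subset (filter_subset_filter _
          (range_subset_range.mpr (by nlinarith)))).mpr ⟨d * q + i, ?_, ?_⟩
        · simp only [mem_filter, mem_range]; exact ⟨by nlinarith, hPi⟩
        · simp
      exact ih.trans_lt (card_lt_card hssub)
  exact (hblocks _).trans (card_le_card (filter_subset_filter _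
    (range_subset_range.mpr (Nat.div_mul_le_self n q))))

lemma logb_lt_one_of_lt {b x : ℝ} (hb : 1 < b) (hx : 0 < x) (hxb : x < b) : logb b x < 1 :=
  (logb_lt_iff_lt_rpow hb hx).mpr (by rwa [rpow_one])

lemma irrational_logb_two {p : ℕ} (hp : Odd p) (hp1 : 1 < p) : Irrational (logb p 2) := by
  rintro ⟨q, hq⟩
  have hp1' : (1 : ℝ) < p := by exact_mod_cast hp1
  have hq0 : (0 : ℝ) < q := hq ▸ logb_pos hp1' one_lt_two
  have hnum : (q.num.toNat : ℝ) = q * q.den := by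
    rw [Rat.cast_def, div_mul_cancel₀ _ (by positivity)]
    exact_mod_cast Int.toNat_of_nonneg (Rat.num_pos.mpr (by exact_mod_cast hq0)).le
  have hreal : (p : ℝ) ^ q.num.toNat = 2 ^ q.den := by
    rw [← rpow_natCast, hnum, rpow_mul (by positivity), hq, rpow_logb (by positivity) hp1'.ne'
      two_pos, rpow_natCast]
  have hnat : p ^ q.num.toNat = 2 ^ q.den := by exact_mod_cast hreal
  exact hp.pow.not_two_dvd_nat (hnat ▸ dvd_pow_self 2 q.den_nz)

lemma logb_two_pow_mul_pow {p : ℕ} (hp1 : 1 < p) (x y : ℕ) :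
    logb p (2 ^ x * p ^ y) = x * logb p 2 + y := by
  have hp1' : (1 : ℝ) < p := by exact_mod_cast hp1
  rw [logb_mul (by positivity) (by positivity), logb_pow, logb_pow, logb_self_eq_one hp1', mul_one]

lemma padicValNat_two_pow_mul_pow {p : ℕ} (hp : Odd p) (x y : ℕ) :
    padicValNat 2 (2 ^ x * p ^ y) = x := by
  have hp0 : p ≠ 0 := by rintro rfl; simp at hp
  rw [padicValNat.mul (by positivity) (pow_ne_zero _ hp0), padicValNat.prime_pow,
    padicValNat.eq_zero_of_not_dvd hp.pow.not_two_dvd_nat, add_zero]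

lemma two_pow_sub_div_le_rpow (K : ℕ) {q : ℕ} (hq : 0 < q) :
    ((2 ^ (K - K / q) : ℕ) : ℝ) ≤ 2 * ((2 : ℝ) ^ K) ^ (1 - (q : ℝ)⁻¹) := by
  have hdiv : (K : ℝ) * (q : ℝ)⁻¹ - 1 ≤ ((K / q : ℕ) : ℝ) := by
    have hlt : K < K / q * q + q := Nat.lt_div_mul_add hq
    have hlt' : (K : ℝ) < (K / q : ℕ) * q + q := by exact_mod_cast hlt
    rw [← div_eq_mul_inv, div_sub_one (by positivity), div_le_iff₀ (by positivity)]
    linarith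
  have hexp : ((K - K / q : ℕ) : ℝ) ≤ K * (1 - (q : ℝ)⁻¹) + 1 := by
    rw [Nat.cast_sub (Nat.div_le_self K q)]
    linarith
  calc ((2 ^ (K - K / q) : ℕ) : ℝ) = (2 : ℝ) ^ ((K - K / q : ℕ) : ℝ) := by
        rw [rpow_natCast, Nat.cast_pow, Nat.cast_ofNat]
    _ ≤ 2 ^ (K * (1 - (q : ℝ)⁻¹) + 1) := rpow_le_rpow_of_exponent_le one_le_two hexp
    _ = 2 * ((2 : ℝ) ^ K) ^ (1 - (q : ℝ)⁻¹) := by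
        rw [rpow_add two_pos, rpow_one, rpow_mul zero_le_two, rpow_natCast, mul_comm]

lemma tendsto_log_add_one_sq_mul_rpow_neg {δ : ℝ} (hδ : 0 < δ) :
    Tendsto (fun N : ℕ => ((Nat.log 2 N : ℝ) + 1) ^ 2 * (N : ℝ) ^ (-δ)) atTop (𝓝 0) := by
  have hlog : Tendsto (fun x : ℝ => log x / x ^ (δ / 2)) atTop (𝓝 0) :=
    (isLittleO_log_rpow_atTop (by positivity)).tendsto_div_nhds_zero
  have hinv : Tendsto (fun x : ℝ => (x ^ (δ / 2))⁻¹) atTop (𝓝 0) :=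
    (tendsto_rpow_atTop (by positivity)).inv_tendsto_atTop
  have hlogb : Tendsto (fun x : ℝ => (logb 2 x + 1) / x ^ (δ / 2)) atTop (𝓝 0) := by
    have := (hlog.div_const (log 2)).add hinv
    rw [zero_div, zero_add] at this
    refine this.congr' (Eventually.of_forall fun x => ?_)
    simp only [logb]; ring
  have hsq := (hlogb.pow 2).comp tendsto_natCast_atTop_atTop
  rw [zero_pow two_ne_zero] at hsq
  refine squeeze_zero' (Eventually.of_forall fun N => by positivity) ?_ hsq
  filter_upwards [eventually_ge_atTop 1] with N hN
  have hN0 : (0 : ℝ) < N := by exact_mod_cast hN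
  have hsplit : (N : ℝ) ^ (-δ) = ((N : ℝ) ^ (δ / 2))⁻¹ ^ 2 := by
    rw [← rpow_neg hN0.le, ← rpow_natCast, ← rpow_mul hN0.le]; norm_num
  show _ ≤ ((logb 2 N + 1) / (N : ℝ) ^ (δ / 2)) ^ 2
  rw [hsplit, ← mul_pow, ← div_eq_mul_inv]
  gcongr
  exact natLog_le_logb N 2

def Ap (p : ℕ) : Set ℕ := {b | ∃ x y : ℕ, b = 2 ^ x * p ^ y}

def IsShortSum (p : ℕ) (C : ℝ) (n : ℕ) : Prop :=
  ∃ B : Finset ℕ, ∃ hB : B.Nonempty, (∀ b ∈ B, b ∈ Ap p) ∧ ∑ b ∈ B, b = n ∧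
    ∀ b ∈ B, (b : ℝ) < C * B.min' hB

noncomputable def shortWindow (p : ℕ) (C : ℝ) (m : ℕ) : Finset ℕ :=
  {b ∈ Ico m ⌈C * m⌉₊ | b ∈ Ap p}

lemma mem_shortWindow {p m b : ℕ} {C : ℝ} :
    b ∈ shortWindow p C m ↔ m ≤ b ∧ (b : ℝ) < C * m ∧ b ∈ Ap p := by
  simp [shortWindow, Nat.lt_ceil, and_assoc]

lemma exists_logb_mem_Ico_of_mem_shortWindow {p a b b' : ℕ} (hp1 : 1 < p) {C : ℝ} (hC : 0 < C)
    (hb' : b' ∈ shortWindow p C (2 ^ a * p ^ b)) :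
    ∃ x y : ℕ, b' = 2 ^ x * p ^ y ∧
      ((x : ℝ) - a) * logb p 2 + ((y : ℝ) - b) ∈ Set.Ico 0 (logb p C) := by
  obtain ⟨hlow, hhigh, x, y, rfl⟩ := mem_shortWindow.mp hb'
  have hp1' : (1 : ℝ) < p := by exact_mod_cast hp1
  refine ⟨x, y, rfl, ?_⟩
  have hlow' := logb_le_logb_of_le hp1' (by positivity) (show ((2 ^ a * p ^ b : ℕ) : ℝ) ≤
    ((2 ^ x * p ^ y : ℕ) : ℝ) by exact_mod_cast hlow)
  have hhigh' := logb_lt_logb hp1' (by positivity) hhigh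
  push_cast at hlow' hhigh'
  rw [logb_mul hC.ne' (by positivity)] at hhigh'
  simp only [logb_two_pow_mul_pow hp1] at hlow' hhigh'
  constructor <;> linarith

lemma padicValNat_lt_of_mem_shortWindow {p m b' K : ℕ} (hp : Odd p) {C : ℝ}
    (hK : C * m ≤ 2 ^ K) (hb' : b' ∈ shortWindow p C m) : padicValNat 2 b' < K := by
  obtain ⟨-, hhigh, x, y, rfl⟩ := mem_shortWindow.mp hb'
  rw [padicValNat_two_pow_mul_pow hp]
  have hp_one : (1 : ℝ) ≤ p := by exact_mod_cast hp.pos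
  have : (2 : ℝ) ^ x < 2 ^ K := by
    calc (2 : ℝ) ^ x ≤ ((2 ^ x * p ^ y : ℕ) : ℝ) := by
          push_cast; exact le_mul_of_one_le_right (by positivity) (one_le_pow₀ hp_one)
      _ < C * m := hhigh
      _ ≤ 2 ^ K := hK
  exact_mod_cast (pow_lt_pow_iff_right₀ one_lt_two).mp this

lemma fract_lt_logb_of_mem_shortWindow {p a b b' : ℕ} (hp : Odd p) (hp1 : 1 < p) {C : ℝ}
    (hC : 0 < C) (hCp : C < p) (hb' : b' ∈ shortWindow p C (2 ^ a * p ^ b)) :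
    Int.fract (padicValNat 2 b' * logb p 2 - a * logb p 2) < logb p C := by
  obtain ⟨x, y, rfl, hv0, hvC⟩ := exists_logb_mem_Ico_of_mem_shortWindow hp1 hC hb'
  have hCp' := logb_lt_one_of_lt (by exact_mod_cast hp1) hC hCp
  rw [padicValNat_two_pow_mul_pow hp,
    Int.fract_eq_iff.mpr ⟨hv0, hvC.trans hCp', (b : ℤ) - y, by push_cast; ring⟩]
  exact hvC

lemma injOn_padicValNat_shortWindow {p a b : ℕ} (hp : Odd p) (hp1 : 1 < p) {C : ℝ}
    (hC : 0 < C) (hCp : C < p) : Set.InjOn (padicValNat 2) (shortWindow p C (2 ^ a * p ^ b)) := by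
  have hCp' := logb_lt_one_of_lt (by exact_mod_cast hp1) hC hCp
  intro b₁ hb₁ b₂ hb₂ heq
  obtain ⟨x₁, y₁, rfl, hv₁0, hv₁C⟩ := exists_logb_mem_Ico_of_mem_shortWindow hp1 hC hb₁
  obtain ⟨x₂, y₂, rfl, hv₂0, hv₂C⟩ := exists_logb_mem_Ico_of_mem_shortWindow hp1 hC hb₂
  simp only [padicValNat_two_pow_mul_pow hp] at heq
  subst heq
  -- `(x - a) logb p 2 + (y - b)` lies in `[0, logb p C) ⊆ [0, 1)` for both `y = y₁, y₂`
  have h₁ : y₁ < y₂ + 1 := by exact_mod_cast (by linarith : (y₁ : ℝ) < y₂ + 1)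
  have h₂ : y₂ < y₁ + 1 := by exact_mod_cast (by linarith : (y₂ : ℝ) < y₁ + 1)
  rw [show y₁ = y₂ by omega]

lemma card_shortWindow_le {p : ℕ} (hp : Odd p) (hp1 : 1 < p) {C : ℝ} (hC : 0 < C)
    (hCp : C < p) :
    ∃ q : ℕ, 0 < q ∧ ∀ a b K : ℕ, C * (2 ^ a * p ^ b) ≤ 2 ^ K →
      #(shortWindow p C (2 ^ a * p ^ b)) ≤ K - K / q := by
  have hp1' : (1 : ℝ) < p := by exact_mod_cast hp1
  have hCp' := logb_lt_one_of_lt hp1' hC hCp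
  obtain ⟨q, hq, hgap⟩ := (irrational_logb_two hp hp1).exists_le_fract_add_mul hCp'
  refine ⟨q, hq, fun a b K hK => ?_⟩
  set G := {x ∈ range K | logb p C ≤ Int.fract ((x : ℕ) * logb p 2 - a * logb p 2)}
  have hG : K / q ≤ #G := by
    refine div_le_card_filter_range (fun M => ?_) K
    obtain ⟨i, hi, hle⟩ := hgap (M * logb p 2 - a * logb p 2)
    exact ⟨i, hi, by push_cast; convert hle using 2; ring⟩
  have hmaps : Set.MapsTo (padicValNat 2) (shortWindow p C (2 ^ a * p ^ b))
      (↑(range K \ G) : Set ℕ) := fun b' hb' => by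
    have hK' : C * ((2 ^ a * p ^ b : ℕ) : ℝ) ≤ 2 ^ K := by push_cast; exact hK
    simpa [G, padicValNat_lt_of_mem_shortWindow hp hK' hb'] using
      fract_lt_logb_of_mem_shortWindow hp hp1 hC hCp hb'
  calc #(shortWindow p C (2 ^ a * p ^ b)) ≤ #(range K \ G) :=
        card_le_card_of_injOn _ hmaps (injOn_padicValNat_shortWindow hp hp1 hC hCp)
    _ = K - #G := by rw [card_sdiff_of_subset (filter_subset _ _), card_range]
    _ ≤ K - K / q := by omega

lemma card_filter_Ap_Iic_le {p : ℕ} (hp : 2 ≤ p) (N : ℕ) :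
    #{m ∈ Iic N | m ∈ Ap p} ≤ (Nat.log 2 N + 1) ^ 2 := by
  set L := Nat.log 2 N
  calc #{m ∈ Iic N | m ∈ Ap p}
      ≤ #((range (L + 1) ×ˢ range (L + 1)).image fun xy => 2 ^ xy.1 * p ^ xy.2) := by
        refine card_le_card fun m hm => ?_
        rw [mem_filter, mem_Iic] at hm
        obtain ⟨hmN, x, y, rfl⟩ := hm
        refine mem_image.mpr ⟨(x, y), ?_, rfl⟩
        simp only [mem_product, mem_range, Nat.lt_succ_iff]
        exact ⟨Nat.le_log_of_pow_le one_lt_two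
            ((Nat.le_mul_of_pos_right _ (by positivity)).trans hmN),
          Nat.le_log_of_pow_le one_lt_two ((Nat.pow_le_pow_left hp y).trans
            ((Nat.le_mul_of_pos_left _ (by positivity)).trans hmN))⟩
    _ ≤ (L + 1) ^ 2 := card_image_le.trans (by simp [sq])

lemma IsShortSum.exists_mem_image_sum {p n : ℕ} {C : ℝ} (h : IsShortSum p C n) :
    ∃ m ∈ Ap p, m ≤ n ∧ n ∈ (shortWindow p C m).powerset.image fun s => ∑ b ∈ s, b := by
  obtain ⟨B, hB, hAp, hsum, hshort⟩ := h
  refine ⟨B.min' hB, hAp _ (B.min'_mem hB),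
    hsum ▸ single_le_sum (f := fun b => b) (fun _ _ => Nat.zero_le _) (B.min'_mem hB),
    mem_image.mpr ⟨B, mem_powerset.mpr fun b hb => ?_, hsum⟩⟩
  exact mem_shortWindow.mpr ⟨B.min'_le b hb, hshort b hb, hAp b hb⟩

lemma ncard_shortSums_le {p : ℕ} (hp : Odd p) (hp1 : 1 < p) {C : ℝ} (hC : 0 < C)
    (hCp : C < p) :
    ∃ q : ℕ, 0 < q ∧ ∀ N K : ℕ, C * N ≤ 2 ^ K →
      {n | 1 ≤ n ∧ n ≤ N ∧ IsShortSum p C n}.ncard ≤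
        (Nat.log 2 N + 1) ^ 2 * 2 ^ (K - K / q) := by
  obtain ⟨q, hq, hwindow⟩ := card_shortWindow_le hp hp1 hC hCp
  refine ⟨q, hq, fun N K hK => ?_⟩
  set M := {m ∈ Iic N | m ∈ Ap p}
  have hsub : {n | 1 ≤ n ∧ n ≤ N ∧ IsShortSum p C n} ⊆
      ↑(M.biUnion fun m => (shortWindow p C m).powerset.image fun s => ∑ b ∈ s, b) := by
    rintro n ⟨-, hnN, hn⟩
    obtain ⟨m, hm, hmn, hnm⟩ := hn.exists_mem_image_sum
    exact mem_coe.mpr (mem_biUnion.mpr ⟨m, mem_filter.mpr ⟨mem_Iic.mpr (hmn.trans hnN), hm⟩, hnm⟩)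
  have hterm : ∀ m ∈ M,
      #((shortWindow p C m).powerset.image fun s => ∑ b ∈ s, b) ≤ 2 ^ (K - K / q) := by
    intro m hm
    rw [mem_filter, mem_Iic] at hm
    obtain ⟨hmN, a, b, rfl⟩ := hm
    refine card_image_le.trans ((card_powerset _).trans_le (Nat.pow_le_pow_right two_pos ?_))
    refine hwindow a b K (le_trans ?_ hK)
    gcongr
    exact_mod_cast hmN
  calc {n | 1 ≤ n ∧ n ≤ N ∧ IsShortSum p C n}.ncard
      ≤ #(M.biUnion fun m => (shortWindow p C m).powerset.image fun s => ∑ b ∈ s, b) :=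
        (Set.ncard_le_ncard hsub (finite_toSet _)).trans_eq (Set.ncard_coe_finset _)
    _ ≤ #M * 2 ^ (K - K / q) := card_biUnion_le.trans (sum_le_card_nsmul _ _ _ hterm)
    _ ≤ (Nat.log 2 N + 1) ^ 2 * 2 ^ (K - K / q) := by
        gcongr; exact card_filter_Ap_Iic_le (by omega) N

lemma exists_ncard_shortSums_le_rpow {p : ℕ} (hp : Odd p) (hp1 : 1 < p) {C : ℝ} (hC : 0 < C)
    (hCp : C < p) :
    ∃ δ A : ℝ, 0 < δ ∧ ∀ N : ℕ, 1 ≤ N →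
      ({n | 1 ≤ n ∧ n ≤ N ∧ IsShortSum p C n}.ncard : ℝ) ≤
        A * (((Nat.log 2 N : ℝ) + 1) ^ 2 * (N : ℝ) ^ (1 - δ)) := by
  obtain ⟨q, hq, hcount⟩ := ncard_shortSums_le hp hp1 hC hCp
  set c := ⌈C⌉₊
  refine ⟨(q : ℝ)⁻¹, 2 * (2 * c) ^ (1 - (q : ℝ)⁻¹), by positivity, fun N hN => ?_⟩
  set K := Nat.log 2 (c * N) + 1
  have hcN : c * N ≠ 0 := by positivity
  have hK : C * N ≤ 2 ^ K := by
    have : c * N < 2 ^ K := Nat.lt_pow_succ_log_self one_lt_two _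
    calc C * N ≤ c * N := by gcongr; exact Nat.le_ceil C
      _ ≤ 2 ^ K := by exact_mod_cast this.le
  have hK' : (2 : ℝ) ^ K ≤ 2 * c * N := by
    have : 2 ^ K ≤ 2 * (c * N) := by
      rw [pow_succ, mul_comm]; exact Nat.mul_le_mul_left 2 (Nat.pow_log_le_self 2 hcN)
    rw [mul_assoc]; exact_mod_cast this
  calc ({n | 1 ≤ n ∧ n ≤ N ∧ IsShortSum p C n}.ncard : ℝ)
      ≤ ((Nat.log 2 N : ℝ) + 1) ^ 2 * ((2 ^ (K - K / q) : ℕ) : ℝ) := by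
        exact_mod_cast hcount N K hK
    _ ≤ ((Nat.log 2 N : ℝ) + 1) ^ 2 * (2 * (2 * c * N) ^ (1 - (q : ℝ)⁻¹)) := by
        gcongr
        refine (two_pow_sub_div_le_rpow K hq).trans ?_
        have : (q : ℝ)⁻¹ ≤ 1 := inv_le_one_of_one_le₀ (by exact_mod_cast hq)
        gcongr
    _ = 2 * (2 * c) ^ (1 - (q : ℝ)⁻¹) *
          (((Nat.log 2 N : ℝ) + 1) ^ 2 * (N : ℝ) ^ (1 - (q : ℝ)⁻¹)) := by
        rw [mul_rpow (by positivity) (by positivity)]; ring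

theorem Ap_short_sums_density_zero (p : ℕ) (hp : Odd p) (hp1 : 1 < p)
    (C : ℝ) (hC1 : 1 < C) (hCp : C < p) :
    Filter.Tendsto
      (fun N : ℕ =>
        (({n : ℕ | 1 ≤ n ∧ n ≤ N ∧
            ∃ B : Finset ℕ, ∃ hB : B.Nonempty,
              (∀ b ∈ B, ∃ x y : ℕ, b = 2 ^ x * p ^ y) ∧
              (∑ b ∈ B, b) = n ∧
              (∀ b ∈ B, (b : ℝ) < C * (B.min' hB : ℝ))}.ncard : ℝ) / N))
      Filter.atTop (nhds 0) := by
  obtain ⟨δ, A, hδ, hbound⟩ := exists_ncard_shortSums_le_rpow hp hp1 (by linarith) hCp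
  have hlim := (tendsto_log_add_one_sq_mul_rpow_neg hδ).const_mul A
  rw [mul_zero] at hlim
  refine squeeze_zero' (Eventually.of_forall fun N => by positivity) ?_ hlim
  filter_upwards [eventually_ge_atTop 1] with N hN
  have hN0 : (0 : ℝ) < N := by exact_mod_cast hN
  rw [div_le_iff₀ hN0]
  calc _ ≤ A * (((Nat.log 2 N : ℝ) + 1) ^ 2 * (N : ℝ) ^ (1 - δ)) := hbound N hN
    _ = A * (((Nat.log 2 N : ℝ) + 1) ^ 2 * (N : ℝ) ^ (-δ)) * N := by
        rw [sub_eq_neg_add, rpow_add hN0, rpow_one]; ring
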